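/- arXiv:1604.07329 — 6 statements merged into one kernel-verified Lean document; each statement's English description precedes it below -/
import Mathlib

section
/- Let a > 0 and g : ℝ → ℝ affine with g > 0 on [0, a], f = g/2, D̄ = {(x, y) : 0 ≤ x ≤ a, 0 ≤ y ≤ g(x)}, q = a + sup g([0, a]). Define H : [0, q] × D̄ → ℝ² by H(t, (x, y)) = (t, min{y, f(t)}) if t < x, and H(t, (x, y)) = (x, min{y, t − x + f(x)}) if t ≥ x. Then H maps into D̄, is continuous, and is a strong deformation retraction of D̄ onto the segment {0} × [0, g(0)/2]: H(0, (x, y)) ∈ {0} × [0, g(0)/2] for all (x, y), H(t, (0, y)) = (0, y) whenever 0 ≤ y ≤ g(0)/2, and H(q, (x, y)) = (x, y). -/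
/-!
Writing `H t (x, y) = (min t x, min y (f (min t x) + max (t - x) 0))` removes the case split, so
`H` is continuous as soon as `f` is. At `t = 0` the first coordinate collapses to `0` and the
second is capped by `f 0 = g 0 / 2`; at `t = q` the cap `q - x + f x` exceeds `sup g ≥ y`, so
nothing moves.
-/

open Set

namespace LinearCell

def closedCell (a : ℝ) (g : ℝ → ℝ) : Set (ℝ × ℝ) :=
  {p | 0 ≤ p.1 ∧ p.1 ≤ a ∧ 0 ≤ p.2 ∧ p.2 ≤ g p.1}

noncomputable def retraction (f : ℝ → ℝ) (t : ℝ) (p : ℝ × ℝ) : ℝ × ℝ :=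
  if t < p.1 then (t, min p.2 (f t)) else (p.1, min p.2 (t - p.1 + f p.1))

variable {f : ℝ → ℝ}

theorem retraction_eq_min_max (f : ℝ → ℝ) (t : ℝ) (p : ℝ × ℝ) :
    retraction f t p = (min t p.1, min p.2 (f (min t p.1) + max (t - p.1) 0)) := by
  rcases lt_or_ge t p.1 with h | h
  · rw [retraction, if_pos h, min_eq_left h.le, max_eq_right (by linarith), add_zero]
  · rw [retraction, if_neg h.not_gt, min_eq_right h, max_eq_left (by linarith), add_comm]

theorem continuous_retraction (hf : Continuous f) :
    Continuous fun z : ℝ × (ℝ × ℝ) => retraction f z.1 z.2 := by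
  simp only [retraction_eq_min_max]
  fun_prop

theorem mapsTo_retraction {a : ℝ} {g : ℝ → ℝ} (hf₀ : ∀ x ∈ Icc 0 a, 0 ≤ f x)
    (hfg : ∀ x ∈ Icc 0 a, f x ≤ g x) :
    MapsTo (fun z : ℝ × (ℝ × ℝ) => retraction f z.1 z.2) (Ici 0 ×ˢ closedCell a g)
      (closedCell a g) := by
  rintro ⟨t, x, y⟩ ⟨ht : 0 ≤ t, hx₀, hxa, hy₀, hyg⟩
  simp only [retraction]
  split_ifs with h
  · have ht' : t ∈ Icc 0 a := ⟨ht, h.le.trans hxa⟩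
    exact ⟨ht, ht'.2, le_min hy₀ (hf₀ t ht'), (min_le_right _ _).trans (hfg t ht')⟩
  · have hfx := hf₀ x ⟨hx₀, hxa⟩
    exact ⟨hx₀, hxa, le_min hy₀ (by linarith), (min_le_left _ _).trans hyg⟩

theorem retraction_zero {p : ℝ × ℝ} (hp : 0 ≤ p.1) :
    retraction f 0 p = (0, min p.2 (f 0)) := by
  rw [retraction_eq_min_max, min_eq_left hp, max_eq_right (by linarith), add_zero]

theorem retraction_zero_mem {a : ℝ} {g : ℝ → ℝ} (hf : 0 ≤ f 0) {p : ℝ × ℝ}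
    (hp : p ∈ closedCell a g) : retraction f 0 p ∈ ({0} : Set ℝ) ×ˢ Icc 0 (f 0) := by
  rw [retraction_zero hp.1]
  exact ⟨rfl, le_min hp.2.2.1 hf, min_le_right _ _⟩

theorem retraction_eq_self {t : ℝ} {p : ℝ × ℝ} (hx : p.1 ≤ t) (hy : p.2 ≤ t - p.1 + f p.1) :
    retraction f t p = p := by
  rw [retraction, if_neg hx.not_gt, min_eq_left hy]

theorem retraction_of_fst_eq_zero {t y : ℝ} (ht : 0 ≤ t) (hy : y ≤ f 0) :
    retraction f t (0, y) = (0, y) :=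
  retraction_eq_self ht (by simp only; linarith)

end LinearCell

open LinearCell in
theorem stmt_3_general (a : ℝ) (g : ℝ → ℝ) (lam cg : ℝ)
    (hg : ∀ x, g x = lam * x + cg) (hgpos : ∀ x ∈ Set.Icc 0 a, 0 < g x) :
    let f : ℝ → ℝ := fun x => g x / 2
    let Dbar : Set (ℝ × ℝ) := {p | 0 ≤ p.1 ∧ p.1 ≤ a ∧ 0 ≤ p.2 ∧ p.2 ≤ g p.1}
    let q : ℝ := a + sSup (g '' Set.Icc 0 a)
    let H : ℝ → ℝ × ℝ → ℝ × ℝ := fun t p =>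
      if t < p.1 then (t, min p.2 (f t))
      else (p.1, min p.2 (t - p.1 + f p.1))
    Set.MapsTo (fun z : ℝ × (ℝ × ℝ) => H z.1 z.2) (Set.Icc 0 q ×ˢ Dbar) Dbar ∧
    ContinuousOn (fun z : ℝ × (ℝ × ℝ) => H z.1 z.2) (Set.Icc 0 q ×ˢ Dbar) ∧
    (∀ p ∈ Dbar, H 0 p ∈ ({0} : Set ℝ) ×ˢ Set.Icc 0 (g 0 / 2)) ∧
    (∀ t ∈ Set.Icc 0 q, ∀ y ∈ Set.Icc 0 (g 0 / 2), H t (0, y) = (0, y)) ∧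
    (∀ p ∈ Dbar, H q p = p) := by
  intro f Dbar q H
  have hgc : Continuous g := by
    rw [show g = fun x => lam * x + cg from funext hg]
    fun_prop
  have hf₀ : ∀ x ∈ Icc 0 a, 0 ≤ f x := fun x hx => (half_pos (hgpos x hx)).le
  have hle_sup : ∀ x ∈ Icc 0 a, g x ≤ sSup (g '' Icc 0 a) := fun x hx =>
    le_csSup (isCompact_Icc.bddAbove_image hgc.continuousOn) (mem_image_of_mem g hx)
  refine ⟨(mapsTo_retraction hf₀ fun x hx => half_le_self (hgpos x hx).le).mono_left
      (prod_mono Icc_subset_Ici_self subset_rfl),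
    (continuous_retraction (hgc.div_const 2)).continuousOn,
    fun p hp => retraction_zero_mem (hf₀ 0 ⟨le_rfl, hp.1.trans hp.2.1⟩) hp,
    fun t ht y hy => retraction_of_fst_eq_zero ht.1 hy.2, ?_⟩
  rintro p ⟨hx₀, hxa, hy₀, hyg⟩
  have hgx := hle_sup p.1 ⟨hx₀, hxa⟩
  have hfx := hf₀ p.1 ⟨hx₀, hxa⟩
  exact retraction_eq_self (by simp only [q]; linarith) (by simp only [q]; linarith)

/-- Case (III) canonical retraction: strong deformation retraction of the closed cell
`D̄` onto the closed half-segment `{0} × [0, g 0 / 2]`. -/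
theorem stmt_3 (a : ℝ) (ha : 0 < a) (g : ℝ → ℝ) (lam cg : ℝ)
    (hg : ∀ x, g x = lam * x + cg) (hgpos : ∀ x ∈ Set.Icc 0 a, 0 < g x) :
    let f : ℝ → ℝ := fun x => g x / 2
    let Dbar : Set (ℝ × ℝ) := {p | 0 ≤ p.1 ∧ p.1 ≤ a ∧ 0 ≤ p.2 ∧ p.2 ≤ g p.1}
    let q : ℝ := a + sSup (g '' Set.Icc 0 a)
    let H : ℝ → ℝ × ℝ → ℝ × ℝ := fun t p =>
      if t < p.1 then (t, min p.2 (f t))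
      else (p.1, min p.2 (t - p.1 + f p.1))
    Set.MapsTo (fun z : ℝ × (ℝ × ℝ) => H z.1 z.2) (Set.Icc 0 q ×ˢ Dbar) Dbar ∧
    ContinuousOn (fun z : ℝ × (ℝ × ℝ) => H z.1 z.2) (Set.Icc 0 q ×ˢ Dbar) ∧
    (∀ p ∈ Dbar, H 0 p ∈ ({0} : Set ℝ) ×ˢ Set.Icc 0 (g 0 / 2)) ∧
    (∀ t ∈ Set.Icc 0 q, ∀ y ∈ Set.Icc 0 (g 0 / 2), H t (0, y) = (0, y)) ∧
    (∀ p ∈ Dbar, H q p = p) :=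
  stmt_3_general a g lam cg hg hgpos
end

section
/- With the notation of the previous statement (a > 0, g affine positive on [0, a], f = g/2, q = a + sup g([0, a]), and H(t, (x, y)) = (t, min{y, f(t)}) for t < x, H(t, (x, y)) = (x, min{y, t − x + f(x)}) for t ≥ x), let C = {0} × (0, g(0)) and D = {(x, y) : 0 < x < a, 0 < y < g(x)}. Then for every t ∈ [0, q] and every (x, y) ∈ C ∪ D, the point H(t, (x, y)) lies in C ∪ D. Consequently, the restriction of H is a strong deformation retraction of C ∪ D onto the half-open segment {0} × (0, g(0)/2]. -/
/-!
Up to time `x` the point `(x, y)` is replaced by `(t, min y (f t))`, which stays strictly under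
the graph of `g` because `0 < f < g` on `[0, a)`; at time `0` this lands on the left edge
`{0} × (0, f 0]`. From time `x` on the abscissa is frozen and the ordinate `min y (t - x + f x)`
stays in `(0, y]`. Both formulas agree at `t = x`, so the homotopy is continuous, and the
threshold `t - x + f x` exceeds `y` once `t ≥ a + sup g`. The set `C ∪ D` is exactly the region
under the graph over `[0, a)`, which is what every stage of the homotopy preserves.
-/

open Set

namespace RetractHomotopy

def region (a : ℝ) (g : ℝ → ℝ) : Set (ℝ × ℝ) :=
  {p | p.1 ∈ Ico 0 a ∧ p.2 ∈ Ioo 0 (g p.1)}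

noncomputable def homotopy (f : ℝ → ℝ) (t : ℝ) (p : ℝ × ℝ) : ℝ × ℝ :=
  if t < p.1 then (t, min p.2 (f t)) else (p.1, min p.2 (t - p.1 + f p.1))

theorem edge_union_interior_eq_region {a : ℝ} (ha : 0 < a) (g : ℝ → ℝ) :
    {p : ℝ × ℝ | p.1 = 0 ∧ 0 < p.2 ∧ p.2 < g 0} ∪
      {p | 0 < p.1 ∧ p.1 < a ∧ 0 < p.2 ∧ p.2 < g p.1} = region a g := by
  ext ⟨x, y⟩
  simp only [region, mem_union, mem_ofPred_eq, mem_Ico, mem_Ioo]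
  constructor
  · rintro (⟨rfl, hy⟩ | ⟨hx0, hxa, hy⟩)
    exacts [⟨⟨le_rfl, ha⟩, hy⟩, ⟨⟨hx0.le, hxa⟩, hy⟩]
  · rintro ⟨⟨hx0, hxa⟩, hy⟩
    rcases hx0.eq_or_lt with rfl | hx0
    exacts [Or.inl ⟨rfl, hy⟩, Or.inr ⟨hx0, hxa, hy⟩]

variable {f : ℝ → ℝ} {t : ℝ} {p : ℝ × ℝ}

theorem homotopy_of_lt (h : t < p.1) : homotopy f t p = (t, min p.2 (f t)) :=
  if_pos h

theorem homotopy_of_le (h : p.1 ≤ t) : homotopy f t p = (p.1, min p.2 (t - p.1 + f p.1)) :=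
  if_neg h.not_gt

theorem homotopy_eq_self (hx : p.1 ≤ t) (hy : p.2 ≤ t - p.1 + f p.1) : homotopy f t p = p := by
  rw [homotopy_of_le hx, min_eq_left hy]

theorem continuous_homotopy (hf : Continuous f) :
    Continuous fun z : ℝ × (ℝ × ℝ) => homotopy f z.1 z.2 := by
  have h : (fun z : ℝ × (ℝ × ℝ) => homotopy f z.1 z.2) = fun z =>
      if z.2.1 ≤ z.1 then (z.2.1, min z.2.2 (z.1 - z.2.1 + f z.2.1))
      else (z.1, min z.2.2 (f z.1)) := by
    funext z
    rcases lt_or_ge z.1 z.2.1 with h | h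
    · rw [homotopy_of_lt h, if_neg h.not_ge]
    · rw [homotopy_of_le h, if_pos h]
  rw [h]
  refine Continuous.if_le (by fun_prop) (by fun_prop) (by fun_prop) (by fun_prop) ?_
  intro z hz
  simp only [hz, sub_self, zero_add]

variable {a : ℝ} {g : ℝ → ℝ}

theorem mapsTo_homotopy_region (hf0 : ∀ x ∈ Ico 0 a, 0 < f x)
    (hfg : ∀ x ∈ Ico 0 a, f x < g x) (ht : 0 ≤ t) :
    MapsTo (homotopy f t) (region a g) (region a g) := by
  rintro ⟨x, y⟩ ⟨⟨hx0, hxa⟩, hy0, hyg⟩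
  rcases lt_or_ge t x with htx | hxt
  · have htI : t ∈ Ico 0 a := ⟨ht, htx.trans hxa⟩
    rw [homotopy_of_lt htx]
    exact ⟨htI, lt_min hy0 (hf0 t htI), (min_le_right _ _).trans_lt (hfg t htI)⟩
  · rw [homotopy_of_le hxt]
    have hthreshold : 0 < t - x + f x := by linarith [hf0 x ⟨hx0, hxa⟩]
    exact ⟨⟨hx0, hxa⟩, lt_min hy0 hthreshold, (min_le_left _ _).trans_lt hyg⟩

theorem homotopy_zero_mem_edge (hf0 : ∀ x ∈ Ico 0 a, 0 < f x) (hp : p ∈ region a g) :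
    homotopy f 0 p ∈ ({0} : Set ℝ) ×ˢ Ioc 0 (f 0) := by
  obtain ⟨⟨hx0, hxa⟩, hy0, -⟩ := hp
  have hf00 : 0 < f 0 := hf0 0 ⟨le_rfl, hx0.trans_lt hxa⟩
  rcases hx0.eq_or_lt with hx | hx
  · rw [homotopy_of_le hx.ge, ← hx, sub_self, zero_add]
    exact ⟨rfl, lt_min hy0 hf00, min_le_right _ _⟩
  · rw [homotopy_of_lt hx]
    exact ⟨rfl, lt_min hy0 hf00, min_le_right _ _⟩

theorem homotopy_edge (ht : 0 ≤ t) {y : ℝ} (hy : y ≤ f 0) : homotopy f t (0, y) = (0, y) :=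
  homotopy_eq_self ht (by simp only [sub_zero]; linarith)

theorem homotopy_eq_self_of_graph_bound (hf0 : ∀ x ∈ Ico 0 a, 0 ≤ f x)
    (hq : ∀ x ∈ Ico 0 a, g x ≤ t - a) (hp : p ∈ region a g) : homotopy f t p = p := by
  obtain ⟨⟨hx0, hxa⟩, hy0, hyg⟩ := hp
  have hgx := hq _ ⟨hx0, hxa⟩
  have hfx := hf0 _ ⟨hx0, hxa⟩
  exact homotopy_eq_self (by linarith) (by linarith)

end RetractHomotopy

open RetractHomotopy in
/-- The Case (III) canonical retraction preserves `C ∪ D` and restricts to a strong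
deformation retraction of `C ∪ D` onto the half-open segment `{0} × (0, g 0 / 2]`. -/
theorem stmt_4 (a : ℝ) (ha : 0 < a) (g : ℝ → ℝ) (lam cg : ℝ)
    (hg : ∀ x, g x = lam * x + cg) (hgpos : ∀ x ∈ Set.Icc 0 a, 0 < g x) :
    let f : ℝ → ℝ := fun x => g x / 2
    let C : Set (ℝ × ℝ) := {p | p.1 = 0 ∧ 0 < p.2 ∧ p.2 < g 0}
    let D : Set (ℝ × ℝ) := {p | 0 < p.1 ∧ p.1 < a ∧ 0 < p.2 ∧ p.2 < g p.1}
    let q : ℝ := a + sSup (g '' Set.Icc 0 a)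
    let H : ℝ → ℝ × ℝ → ℝ × ℝ := fun t p =>
      if t < p.1 then (t, min p.2 (f t))
      else (p.1, min p.2 (t - p.1 + f p.1))
    (∀ t ∈ Set.Icc 0 q, ∀ p ∈ C ∪ D, H t p ∈ C ∪ D) ∧
    ContinuousOn (fun z : ℝ × (ℝ × ℝ) => H z.1 z.2) (Set.Icc 0 q ×ˢ (C ∪ D)) ∧
    (∀ p ∈ C ∪ D, H 0 p ∈ ({0} : Set ℝ) ×ˢ Set.Ioc 0 (g 0 / 2)) ∧
    (∀ t ∈ Set.Icc 0 q, ∀ y ∈ Set.Ioc 0 (g 0 / 2), H t (0, y) = (0, y)) ∧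
    (∀ p ∈ C ∪ D, H q p = p) := by
  intro f C D q H
  have hgc : Continuous g := by
    rw [funext hg]
    fun_prop
  have hpos : ∀ x ∈ Ico 0 a, 0 < g x := fun x hx => hgpos x (Ico_subset_Icc_self hx)
  have hf0 : ∀ x ∈ Ico 0 a, 0 < f x := fun x hx => half_pos (hpos x hx)
  have hfg : ∀ x ∈ Ico 0 a, f x < g x := fun x hx => half_lt_self (hpos x hx)
  have hq : ∀ x ∈ Ico 0 a, g x ≤ q - a := fun x hx => by
    rw [add_sub_cancel_left]
    exact le_csSup (isCompact_Icc.image hgc).bddAbove (mem_image_of_mem g (Ico_subset_Icc_self hx))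
  rw [edge_union_interior_eq_region ha g]
  exact ⟨fun t ht => mapsTo_homotopy_region hf0 hfg ht.1,
    (continuous_homotopy (by fun_prop)).continuousOn,
    fun p => homotopy_zero_mem_edge hf0,
    fun t ht y hy => homotopy_edge ht.1 hy.2,
    fun p => homotopy_eq_self_of_graph_bound (fun x hx => (hf0 x hx).le) hq⟩
end

section
/- Let g : ℝ → ℝ be affine with g > 0 on [0, a], f = g/2, and define H on [0, q] × D̄ as in Case II: H(t, (x, y)) = (t, min{y, t, f(t)}) for t < x and H(t, (x, y)) = (x, min{y, t, t − x + f(x)}) for t ≥ x, where D̄ = {(x, y) : 0 ≤ x ≤ a, 0 ≤ y ≤ g(x)} and q = a + sup g([0, a]). Then for every (x, y) ∈ D̄, one has H(t, (x, y)) = (x, y) if and only if t ≥ max{x, y, x + y − g(x)/2}. -/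
theorem ite_lt_mk_min_eq_self_iff {α : Type*} [LinearOrder α] {t x y c : α} (u : α) :
    (if t < x then (t, u) else (x, min y c)) = (x, y) ↔ x ≤ t ∧ y ≤ c := by
  split_ifs with htx
  · simp [htx.ne, not_le.mpr htx]
  · simp [not_lt.mp htx]

theorem stmt_5_general (a : ℝ) (g : ℝ → ℝ) :
    let f : ℝ → ℝ := fun x => g x / 2
    let Dbar : Set (ℝ × ℝ) := {p | 0 ≤ p.1 ∧ p.1 ≤ a ∧ 0 ≤ p.2 ∧ p.2 ≤ g p.1}
    let q : ℝ := a + sSup (g '' Set.Icc 0 a)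
    let H : ℝ → ℝ × ℝ → ℝ × ℝ := fun t p =>
      if t < p.1 then (t, min p.2 (min t (f t)))
      else (p.1, min p.2 (min t (t - p.1 + f p.1)))
    ∀ t ∈ Set.Icc 0 q, ∀ p ∈ Dbar,
      (H t p = p ↔ max p.1 (max p.2 (p.1 + p.2 - g p.1 / 2)) ≤ t) := by
  intro f Dbar q H t _ ⟨x, y⟩ _
  simp only [H, f, ite_lt_mk_min_eq_self_iff, le_min_iff, max_le_iff]
  constructor
  · rintro ⟨hxt, hyt, hy⟩
    exact ⟨hxt, hyt, by linarith⟩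
  · rintro ⟨hxt, hyt, hxy⟩
    exact ⟨hxt, hyt, by linarith⟩

/-- Fixing points of the Case (II) canonical retraction: a point `(x,y)` of the closed
cell is fixed by `H(t,·)` exactly when `t ≥ max{x, y, x + y - g x / 2}`. -/
theorem stmt_5 (a : ℝ) (ha : 0 < a) (g : ℝ → ℝ) (lam cg : ℝ)
    (hg : ∀ x, g x = lam * x + cg) (hgpos : ∀ x ∈ Set.Icc 0 a, 0 < g x) :
    let f : ℝ → ℝ := fun x => g x / 2
    let Dbar : Set (ℝ × ℝ) := {p | 0 ≤ p.1 ∧ p.1 ≤ a ∧ 0 ≤ p.2 ∧ p.2 ≤ g p.1}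
    let q : ℝ := a + sSup (g '' Set.Icc 0 a)
    let H : ℝ → ℝ × ℝ → ℝ × ℝ := fun t p =>
      if t < p.1 then (t, min p.2 (min t (f t)))
      else (p.1, min p.2 (min t (t - p.1 + f p.1)))
    ∀ t ∈ Set.Icc 0 q, ∀ p ∈ Dbar,
      (H t p = p ↔ max p.1 (max p.2 (p.1 + p.2 - g p.1 / 2)) ≤ t) :=
  stmt_5_general a g
end

section
/- Let A ⊆ ℝⁿ, c ∈ A, and H₁ : [0, q₁] × A → A a strong deformation retraction of A onto {c}. Let F : A → ℝ be a continuous bounded function with F(x) > 0 for all x ∈ A, and set C' = {(x, y) ∈ A × ℝ : 0 < y ≤ F(x)} and q = q₁ + sup F(A). Define H : [0, q] × C' → ℝⁿ⁺¹ by H(t, (x, y)) = (H₁(t, x), F(H₁(t, x))) if t < q₁, and H(t, (x, y)) = (x, max{F(x) − (t − q₁), y}) if t ≥ q₁. Then H maps into C', is continuous, and is a strong deformation retraction of C' onto the point (c, F(c)). -/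
/-!
For `t ≤ q₁` the homotopy follows the contraction of `A`, lifted to the graph of `F`; since
`H₁ (q₁, x) = x`, at time `q₁` it is the retraction `(x, y) ↦ (x, F x)` of `C'` onto that graph.
Afterwards the height is `max (F x - (t - q₁)) y`: the floor `F x - (t - q₁)` descends uniformly,
and once it has dropped by `sup F` it lies below every point of `C'`, so the map is the identity.
The two pieces agree at `t = q₁` because `y ≤ F x`.
-/

open Set

section Gluing

variable {α β γ : Type*} [TopologicalSpace α] [TopologicalSpace β]
  [LinearOrder γ] [TopologicalSpace γ] [OrderClosedTopology γ]

theorem ContinuousOn.if_lt_const {φ : α → γ} {a : γ} {f g : α → β} {s : Set α}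
    (hφ : Continuous φ) (hf : ContinuousOn f (s ∩ {x | φ x ≤ a}))
    (hg : ContinuousOn g (s ∩ {x | a ≤ φ x})) (hfg : ∀ x ∈ s, φ x = a → f x = g x) :
    ContinuousOn (fun x => if φ x < a then f x else g x) s := by
  refine ContinuousOn.if (fun x hx => hfg x hx.1 (frontier_lt_subset_eq hφ continuous_const hx.2))
    (hf.mono (inter_subset_inter_right s (closure_lt_subset_le hφ continuous_const)))
    (hg.mono (inter_subset_inter_right s ?_))
  simp only [not_lt]
  exact (isClosed_le continuous_const hφ).closure_subset

end Gluing

section HalfCell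

variable {X : Type*} {A : Set X} {F : X → ℝ} {H₁ : ℝ × X → X} {q₁ : ℝ}

def halfCell (A : Set X) (F : X → ℝ) : Set (X × ℝ) :=
  {p | p.1 ∈ A ∧ 0 < p.2 ∧ p.2 ≤ F p.1}

noncomputable def halfCellHomotopy (H₁ : ℝ × X → X) (F : X → ℝ) (q₁ : ℝ)
    (z : ℝ × (X × ℝ)) : X × ℝ :=
  if z.1 < q₁ then (H₁ (z.1, z.2.1), F (H₁ (z.1, z.2.1)))
  else (z.2.1, max (F z.2.1 - (z.1 - q₁)) z.2.2)

theorem mapsTo_halfCellHomotopy (hmaps₁ : MapsTo H₁ (Icc 0 q₁ ×ˢ A) A)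
    (hFpos : ∀ x ∈ A, 0 < F x) :
    MapsTo (halfCellHomotopy H₁ F q₁) (Ici 0 ×ˢ halfCell A F) (halfCell A F) := by
  rintro ⟨t, x, y⟩ ⟨ht, hx, hy, hyF⟩
  unfold halfCellHomotopy
  split_ifs with htq
  · have hH : H₁ (t, x) ∈ A := hmaps₁ ⟨⟨ht, htq.le⟩, hx⟩
    exact ⟨hH, hFpos _ hH, le_rfl⟩
  · exact ⟨hx, hy.trans_le (le_max_right _ _), max_le (by linarith) hyF⟩

theorem continuousOn_halfCellHomotopy [TopologicalSpace X]
    (hmaps₁ : MapsTo H₁ (Icc 0 q₁ ×ˢ A) A) (hcont₁ : ContinuousOn H₁ (Icc 0 q₁ ×ˢ A))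
    (h₁q : ∀ x ∈ A, H₁ (q₁, x) = x) (hFcont : ContinuousOn F A) :
    ContinuousOn (halfCellHomotopy H₁ F q₁) (Ici 0 ×ˢ halfCell A F) := by
  have hsub : Ici 0 ×ˢ halfCell A F ∩ {z | z.1 ≤ q₁} ⊆
      (fun z : ℝ × (X × ℝ) => (z.1, z.2.1)) ⁻¹' (Icc 0 q₁ ×ˢ A) :=
    fun z hz => ⟨⟨hz.1.1, hz.2⟩, hz.1.2.1⟩
  have hcontract : ContinuousOn (fun z : ℝ × (X × ℝ) => H₁ (z.1, z.2.1))
      (Ici 0 ×ˢ halfCell A F ∩ {z | z.1 ≤ q₁}) :=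
    hcont₁.comp (by fun_prop) hsub
  refine ContinuousOn.if_lt_const continuous_fst
    (hcontract.prodMk (hFcont.comp hcontract fun z hz => hmaps₁ (hsub hz))) ?_ ?_
  · refine (continuous_fst.comp continuous_snd).continuousOn.prodMk (ContinuousOn.sup ?_ ?_)
    · exact (hFcont.comp (by fun_prop) fun z hz => hz.1.2.1).sub (by fun_prop)
    · fun_prop
  · rintro ⟨t, x, y⟩ ⟨-, hx, -, hyF⟩ (rfl : t = q₁)
    simp only [h₁q x hx, sub_self, sub_zero, max_eq_left hyF]

theorem halfCellHomotopy_zero {c : X} (hq₁ : 0 ≤ q₁) (h₁0 : ∀ x ∈ A, H₁ (0, x) = c)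
    (h₁q : ∀ x ∈ A, H₁ (q₁, x) = x) {p : X × ℝ} (hp : p ∈ halfCell A F) :
    halfCellHomotopy H₁ F q₁ (0, p) = (c, F c) := by
  obtain ⟨x, y⟩ := p
  obtain ⟨hx, -, hyF⟩ := hp
  rcases hq₁.lt_or_eq with hpos | rfl
  · simp only [halfCellHomotopy, if_pos hpos, h₁0 x hx]
  · -- A contraction of length zero forces `A = {c}`.
    obtain rfl : x = c := (h₁q x hx).symm.trans (h₁0 x hx)
    simp only [halfCellHomotopy, lt_irrefl, if_false, sub_zero, max_eq_left hyF]

theorem halfCellHomotopy_apex {c : X} (h₁fix : ∀ t ∈ Icc 0 q₁, H₁ (t, c) = c) {t : ℝ}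
    (ht : 0 ≤ t) : halfCellHomotopy H₁ F q₁ (t, (c, F c)) = (c, F c) := by
  unfold halfCellHomotopy
  split_ifs with htq
  · simp only [h₁fix t ⟨ht, htq.le⟩]
  · rw [max_eq_right (by linarith)]

theorem halfCellHomotopy_of_le {p : X × ℝ} (hp : p ∈ halfCell A F) {t : ℝ}
    (ht : q₁ + F p.1 ≤ t) : halfCellHomotopy H₁ F q₁ (t, p) = p := by
  obtain ⟨-, hy, hyF⟩ := hp
  have htq : ¬t < q₁ := by linarith
  simp only [halfCellHomotopy, if_neg htq, max_eq_right (by linarith : F p.1 - (t - q₁) ≤ p.2)]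

end HalfCell

theorem stmt_10_general (n : ℕ) (A : Set (Fin n → ℝ)) (c : Fin n → ℝ)
    (q₁ : ℝ) (hq₁ : 0 ≤ q₁) (H₁ : ℝ × (Fin n → ℝ) → (Fin n → ℝ))
    (hmaps₁ : Set.MapsTo H₁ (Set.Icc 0 q₁ ×ˢ A) A)
    (hcont₁ : ContinuousOn H₁ (Set.Icc 0 q₁ ×ˢ A))
    (h₁0 : ∀ x ∈ A, H₁ (0, x) = c)
    (h₁fix : ∀ t ∈ Set.Icc 0 q₁, H₁ (t, c) = c)
    (h₁q : ∀ x ∈ A, H₁ (q₁, x) = x)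
    (F : (Fin n → ℝ) → ℝ) (hFcont : ContinuousOn F A)
    (hFpos : ∀ x ∈ A, 0 < F x) (hFbdd : BddAbove (F '' A)) :
    let C' : Set ((Fin n → ℝ) × ℝ) := {p | p.1 ∈ A ∧ 0 < p.2 ∧ p.2 ≤ F p.1}
    let q : ℝ := q₁ + sSup (F '' A)
    let H : ℝ × ((Fin n → ℝ) × ℝ) → (Fin n → ℝ) × ℝ := fun z =>
      if z.1 < q₁ then (H₁ (z.1, z.2.1), F (H₁ (z.1, z.2.1)))
      else (z.2.1, max (F z.2.1 - (z.1 - q₁)) z.2.2)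
    Set.MapsTo H (Set.Icc 0 q ×ˢ C') C' ∧
    ContinuousOn H (Set.Icc 0 q ×ˢ C') ∧
    (∀ p ∈ C', H (0, p) = (c, F c)) ∧
    (∀ t ∈ Set.Icc 0 q, H (t, (c, F c)) = (c, F c)) ∧
    (∀ p ∈ C', H (q, p) = p) := by
  intro C' q H
  have hdom : Icc 0 q ×ˢ C' ⊆ Ici 0 ×ˢ halfCell A F := prod_mono Icc_subset_Ici_self subset_rfl
  have hq : ∀ x ∈ A, q₁ + F x ≤ q := fun x hx =>
    add_le_add_right (le_csSup hFbdd (mem_image_of_mem F hx)) q₁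
  exact ⟨(mapsTo_halfCellHomotopy hmaps₁ hFpos).mono_left hdom,
    (continuousOn_halfCellHomotopy hmaps₁ hcont₁ h₁q hFcont).mono hdom,
    fun p hp => halfCellHomotopy_zero hq₁ h₁0 h₁q hp,
    fun t ht => halfCellHomotopy_apex h₁fix ht.1,
    fun p hp => halfCellHomotopy_of_le hp (hq p.1 hp.1)⟩

/-- Recursive step of the contractibility of half-cells: from a contraction of `A` to
`c` one builds a strong deformation retraction of `C' = {(x,y) : x ∈ A, 0 < y ≤ F x}`
onto the point `(c, F c)`. -/
theorem stmt_10 (n : ℕ) (A : Set (Fin n → ℝ)) (c : Fin n → ℝ) (hc : c ∈ A)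
    (q₁ : ℝ) (hq₁ : 0 ≤ q₁) (H₁ : ℝ × (Fin n → ℝ) → (Fin n → ℝ))
    (hmaps₁ : Set.MapsTo H₁ (Set.Icc 0 q₁ ×ˢ A) A)
    (hcont₁ : ContinuousOn H₁ (Set.Icc 0 q₁ ×ˢ A))
    (h₁0 : ∀ x ∈ A, H₁ (0, x) = c)
    (h₁fix : ∀ t ∈ Set.Icc 0 q₁, H₁ (t, c) = c)
    (h₁q : ∀ x ∈ A, H₁ (q₁, x) = x)
    (F : (Fin n → ℝ) → ℝ) (hFcont : ContinuousOn F A)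
    (hFpos : ∀ x ∈ A, 0 < F x) (hFbdd : BddAbove (F '' A)) :
    let C' : Set ((Fin n → ℝ) × ℝ) := {p | p.1 ∈ A ∧ 0 < p.2 ∧ p.2 ≤ F p.1}
    let q : ℝ := q₁ + sSup (F '' A)
    let H : ℝ × ((Fin n → ℝ) × ℝ) → (Fin n → ℝ) × ℝ := fun z =>
      if z.1 < q₁ then (H₁ (z.1, z.2.1), F (H₁ (z.1, z.2.1)))
      else (z.2.1, max (F z.2.1 - (z.1 - q₁)) z.2.2)
    Set.MapsTo H (Set.Icc 0 q ×ˢ C') C' ∧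
    ContinuousOn H (Set.Icc 0 q ×ˢ C') ∧
    (∀ p ∈ C', H (0, p) = (c, F c)) ∧
    (∀ t ∈ Set.Icc 0 q, H (t, (c, F c)) = (c, F c)) ∧
    (∀ p ∈ C', H (q, p) = p) :=
  stmt_10_general n A c q₁ hq₁ H₁ hmaps₁ hcont₁ h₁0 h₁fix h₁q F hFcont hFpos hFbdd
end

section
/- Let X be a topological space, X₁, X₂ ⊆ X closed subsets with X = X₁ ∪ X₂, and A ⊆ X₁ ∩ X₂. Suppose 0 ≤ q₁ ≤ q₂ and Hᵢ : [0, qᵢ] × Xᵢ → Xᵢ (i = 1, 2) are strong deformation retractions of Xᵢ onto A such that: (a) H₂(t, x) = H₁(t, x) for all x ∈ X₁ ∩ X₂ and t ∈ [0, q₁], and (b) H₁(q₁, x) = x for x ∈ X₁ and H₂(t, x) = x for all x ∈ X₁ ∩ X₂ and t ∈ [q₁, q₂]. Then the map H : [0, q₂] × X → X defined by H(t, x) = H₁(min(t, q₁), x) for x ∈ X₁ and H(t, x) = H₂(t, x) for x ∈ X₂ is well-defined, continuous, and a strong deformation retraction of X onto A. -/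
/-!
On `X₁` the glued homotopy runs `H₁` and then stays still, on `X₂` it runs `H₂`. On the
overlap these agree: up to time `q₁` by `(a)`, and afterwards both are the identity by `(b)`.
Since `[0, q₂] × X₁` and `[0, q₂] × X₂` are closed and cover `[0, q₂] × X`, the pasting lemma
gives continuity, and the retraction properties are checked separately on each piece.
-/

open Set

open scoped Classical

lemma continuousOn_comp_min_fst {X Y : Type*} [TopologicalSpace X] [TopologicalSpace Y]
    {q : ℝ} (hq : 0 ≤ q) {S : Set X} {H : ℝ × X → Y} (hH : ContinuousOn H (Icc 0 q ×ˢ S)) :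
    ContinuousOn (fun z : ℝ × X => H (min z.1 q, z.2)) (Ici 0 ×ˢ S) :=
  hH.comp ((continuous_fst.min continuous_const).prodMk continuous_snd).continuousOn
    fun _ hz => ⟨⟨le_min hz.1 hq, min_le_right _ _⟩, hz.2⟩

lemma apply_min_eq_of_agree_of_stationary {X : Type*} {H₁ H₂ : ℝ × X → X} {q₁ q₂ t : ℝ}
    {x : X} (ht : t ∈ Icc 0 q₂) (hagree : ∀ s ∈ Icc 0 q₁, H₂ (s, x) = H₁ (s, x))
    (h₁q : H₁ (q₁, x) = x) (hlate : ∀ s ∈ Icc q₁ q₂, H₂ (s, x) = x) :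
    H₁ (min t q₁, x) = H₂ (t, x) := by
  rcases le_total t q₁ with htq | hqt
  · rw [min_eq_left htq, hagree t ⟨ht.1, htq⟩]
  · rw [min_eq_right hqt, h₁q, hlate t ⟨hqt, ht.2⟩]

theorem stmt_11_general {X : Type*} [TopologicalSpace X]
    (X₁ X₂ : Set X) (hX₁ : IsClosed X₁) (hX₂ : IsClosed X₂)
    (hcover : X₁ ∪ X₂ = Set.univ)
    (A : Set X) (hA : A ⊆ X₁ ∩ X₂)
    (q₁ q₂ : ℝ) (hq₁ : 0 ≤ q₁) (hq₁₂ : q₁ ≤ q₂)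
    (H₁ H₂ : ℝ × X → X)
    (hc₁ : ContinuousOn H₁ (Set.Icc 0 q₁ ×ˢ X₁))
    (hc₂ : ContinuousOn H₂ (Set.Icc 0 q₂ ×ˢ X₂))
    (h₁0 : ∀ x ∈ X₁, H₁ (0, x) ∈ A) (h₂0 : ∀ x ∈ X₂, H₂ (0, x) ∈ A)
    (h₁A : ∀ t ∈ Set.Icc 0 q₁, ∀ a ∈ A, H₁ (t, a) = a)
    (h₁q : ∀ x ∈ X₁, H₁ (q₁, x) = x) (h₂q : ∀ x ∈ X₂, H₂ (q₂, x) = x)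
    (hagree : ∀ t ∈ Set.Icc 0 q₁, ∀ x ∈ X₁ ∩ X₂, H₂ (t, x) = H₁ (t, x))
    (hlate : ∀ t ∈ Set.Icc q₁ q₂, ∀ x ∈ X₁ ∩ X₂, H₂ (t, x) = x) :
    let H : ℝ × X → X := fun z =>
      if z.2 ∈ X₁ then H₁ (min z.1 q₁, z.2) else H₂ z
    -- well-definedness: on the overlap the two formulas agree
    (∀ t ∈ Set.Icc 0 q₂, ∀ x ∈ X₁ ∩ X₂, H (t, x) = H₂ (t, x)) ∧
    ContinuousOn H (Set.Icc 0 q₂ ×ˢ (Set.univ : Set X)) ∧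
    -- strong deformation retraction of `X` onto `A`
    (∀ x : X, H (0, x) ∈ A) ∧
    (∀ t ∈ Set.Icc 0 q₂, ∀ a ∈ A, H (t, a) = a) ∧
    (∀ x : X, H (q₂, x) = x) := by
  intro H
  have hX₂_of_not : ∀ x, x ∉ X₁ → x ∈ X₂ := fun x hx =>
    (hcover.symm ▸ mem_univ x : x ∈ X₁ ∪ X₂).resolve_left hx
  have hwd : ∀ t ∈ Icc 0 q₂, ∀ x ∈ X₁ ∩ X₂, H (t, x) = H₂ (t, x) := fun t ht x hx =>
    (if_pos hx.1).trans <| apply_min_eq_of_agree_of_stationary ht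
      (fun s hs => hagree s hs x hx) (h₁q x hx.1) (fun s hs => hlate s hs x hx)
  have hH_on₁ : EqOn H (fun z => H₁ (min z.1 q₁, z.2)) (Icc 0 q₂ ×ˢ X₁) :=
    fun z hz => if_pos hz.2
  have hH_on₂ : EqOn H H₂ (Icc 0 q₂ ×ˢ X₂) := by
    rintro ⟨t, x⟩ ⟨ht, hx⟩
    by_cases hx₁ : x ∈ X₁
    · exact hwd t ht x ⟨hx₁, hx⟩
    · exact if_neg hx₁
  have h0 : (0 : ℝ) ∈ Icc 0 q₂ := left_mem_Icc.2 (hq₁.trans hq₁₂)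
  have hq₂ : q₂ ∈ Icc 0 q₂ := right_mem_Icc.2 (hq₁.trans hq₁₂)
  refine ⟨hwd, ?_, fun x => ?_, fun t ht a ha => ?_, fun x => ?_⟩
  · rw [← hcover, prod_union]
    refine ContinuousOn.union_of_isClosed ?_ ?_ (isClosed_Icc.prod hX₁) (isClosed_Icc.prod hX₂)
    · exact ((continuousOn_comp_min_fst hq₁ hc₁).mono
        (prod_mono Icc_subset_Ici_self subset_rfl)).congr hH_on₁
    · exact hc₂.congr hH_on₂
  · by_cases hx₁ : x ∈ X₁
    · rw [hH_on₁ (mk_mem_prod h0 hx₁)]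
      simpa only [min_eq_left hq₁] using h₁0 x hx₁
    · rw [hH_on₂ (mk_mem_prod h0 (hX₂_of_not x hx₁))]
      exact h₂0 x (hX₂_of_not x hx₁)
  · rw [hH_on₁ (mk_mem_prod ht (hA ha).1)]
    exact h₁A _ ⟨le_min ht.1 hq₁, min_le_right _ _⟩ a ha
  · by_cases hx₁ : x ∈ X₁
    · rw [hH_on₁ (mk_mem_prod hq₂ hx₁)]
      simpa only [min_eq_right hq₁₂] using h₁q x hx₁
    · rw [hH_on₂ (mk_mem_prod hq₂ (hX₂_of_not x hx₁))]
      exact h₂q x (hX₂_of_not x hx₁)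

/-- Gluing two compatible strong deformation retractions along a closed cover. -/
theorem stmt_11 {X : Type*} [TopologicalSpace X]
    (X₁ X₂ : Set X) (hX₁ : IsClosed X₁) (hX₂ : IsClosed X₂)
    (hcover : X₁ ∪ X₂ = Set.univ)
    (A : Set X) (hA : A ⊆ X₁ ∩ X₂)
    (q₁ q₂ : ℝ) (hq₁ : 0 ≤ q₁) (hq₁₂ : q₁ ≤ q₂)
    (H₁ H₂ : ℝ × X → X)
    (hm₁ : Set.MapsTo H₁ (Set.Icc 0 q₁ ×ˢ X₁) X₁)
    (hm₂ : Set.MapsTo H₂ (Set.Icc 0 q₂ ×ˢ X₂) X₂)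
    (hc₁ : ContinuousOn H₁ (Set.Icc 0 q₁ ×ˢ X₁))
    (hc₂ : ContinuousOn H₂ (Set.Icc 0 q₂ ×ˢ X₂))
    (h₁0 : ∀ x ∈ X₁, H₁ (0, x) ∈ A) (h₂0 : ∀ x ∈ X₂, H₂ (0, x) ∈ A)
    (h₁A : ∀ t ∈ Set.Icc 0 q₁, ∀ a ∈ A, H₁ (t, a) = a)
    (h₂A : ∀ t ∈ Set.Icc 0 q₂, ∀ a ∈ A, H₂ (t, a) = a)
    (h₁q : ∀ x ∈ X₁, H₁ (q₁, x) = x) (h₂q : ∀ x ∈ X₂, H₂ (q₂, x) = x)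
    (hagree : ∀ t ∈ Set.Icc 0 q₁, ∀ x ∈ X₁ ∩ X₂, H₂ (t, x) = H₁ (t, x))
    (hlate : ∀ t ∈ Set.Icc q₁ q₂, ∀ x ∈ X₁ ∩ X₂, H₂ (t, x) = x) :
    let H : ℝ × X → X := fun z =>
      if z.2 ∈ X₁ then H₁ (min z.1 q₁, z.2) else H₂ z
    -- well-definedness: on the overlap the two formulas agree
    (∀ t ∈ Set.Icc 0 q₂, ∀ x ∈ X₁ ∩ X₂, H (t, x) = H₂ (t, x)) ∧
    ContinuousOn H (Set.Icc 0 q₂ ×ˢ (Set.univ : Set X)) ∧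
    -- strong deformation retraction of `X` onto `A`
    (∀ x : X, H (0, x) ∈ A) ∧
    (∀ t ∈ Set.Icc 0 q₂, ∀ a ∈ A, H (t, a) = a) ∧
    (∀ x : X, H (q₂, x) = x) :=
  stmt_11_general X₁ X₂ hX₁ hX₂ hcover A hA q₁ q₂ hq₁ hq₁₂ H₁ H₂ hc₁ hc₂ h₁0 h₂0 h₁A h₁q h₂q hagree
    hlate
end

section
/- Let a > 0 and define the half-cell contraction data: C' = (0, a/2] ⊆ ℝ, with H : [0, a/2] × C' → C', H(t, x) = max(a/2 − t, x). Let F : [0, a/2] → ℝ be affine with F > 0 on (0, a/2], bounded above by M. Then the product construction H̃ : [0, a/2 + M] × E → E on E = {(x, y) : x ∈ (0, a/2], 0 < y ≤ F(x)}, defined by H̃(t, (x, y)) = (H(t, x), F(H(t, x))) for t < a/2 and H̃(t, (x, y)) = (x, max{F(x) − (t − a/2), y}) for t ≥ a/2, is a strong deformation retraction of E onto the point (a/2, F(a/2)). In particular, the two-dimensional half-cell E is contractible. -/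
/-!
Write `c = a / 2`. The contraction runs in two phases. For `t ≤ c` the point is pushed onto the
top graph `y = F x` and slid along it to the corner `(c, F c)` by the one-dimensional contraction
`x ↦ max (c - t) x` of `(0, c]`; for `t ≥ c` the point instead stays at `x` and its height
`max (F x - (t - c)) y` falls from `F x` to `y`, reaching `y` once `t - c ≥ F x`, so a uniform
upper bound `M` for `F` ends the homotopy at the identity. Clamping `t` to each phase gives one
formula that is continuous everywhere and agrees with the piecewise map on the half-cell.
-/

open Set

namespace HalfCell

variable (F : ℝ → ℝ) (c : ℝ)

def cell : Set (ℝ × ℝ) := {p | p.1 ∈ Ioc 0 c ∧ 0 < p.2 ∧ p.2 ≤ F p.1}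

noncomputable def retraction (t : ℝ) (p : ℝ × ℝ) : ℝ × ℝ :=
  if t < c then (max (c - t) p.1, F (max (c - t) p.1))
  else (p.1, max (F p.1 - (t - c)) p.2)

def clampedRetraction (t : ℝ) (p : ℝ × ℝ) : ℝ × ℝ :=
  (max (c - min t c) p.1,
    max (F (max (c - min t c) p.1) - max (t - c) 0) (min p.2 (F (max (c - min t c) p.1))))

variable {F c}

theorem max_sub_mem_Ioc {t x : ℝ} (ht : 0 ≤ t) (hx : x ∈ Ioc 0 c) : max (c - t) x ∈ Ioc 0 c :=
  ⟨hx.1.trans_le (le_max_right _ _), max_le (by linarith) hx.2⟩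

theorem retraction_mem_cell (hFpos : ∀ x ∈ Ioc 0 c, 0 < F x) {t : ℝ} (ht : 0 ≤ t) {p : ℝ × ℝ}
    (hp : p ∈ cell F c) : retraction F c t p ∈ cell F c := by
  obtain ⟨hx, hy0, hyF⟩ := hp
  unfold retraction
  split_ifs with htc
  · exact ⟨max_sub_mem_Ioc ht hx, hFpos _ (max_sub_mem_Ioc ht hx), le_rfl⟩
  · exact ⟨hx, lt_max_of_lt_right hy0, max_le (by linarith) hyF⟩

theorem continuous_clampedRetraction (hF : Continuous F) :
    Continuous fun z : ℝ × (ℝ × ℝ) => clampedRetraction F c z.1 z.2 := by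
  unfold clampedRetraction
  fun_prop

theorem retraction_eq_clampedRetraction {t : ℝ} {p : ℝ × ℝ} (hx : 0 ≤ p.1) (hy : p.2 ≤ F p.1) :
    retraction F c t p = clampedRetraction F c t p := by
  unfold retraction clampedRetraction
  split_ifs with htc
  · rw [min_eq_left htc.le, max_eq_right (by linarith : t - c ≤ 0), sub_zero,
      max_eq_left (min_le_right _ _)]
  · rw [not_lt] at htc
    rw [min_eq_right htc, sub_self, max_eq_right hx, max_eq_left (by linarith : 0 ≤ t - c),
      min_eq_left hy]

theorem continuousOn_retraction (hF : Continuous F) :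
    ContinuousOn (fun z : ℝ × (ℝ × ℝ) => retraction F c z.1 z.2) (univ ×ˢ cell F c) := by
  refine (continuous_clampedRetraction (c := c) hF).continuousOn.congr ?_
  rintro ⟨t, p⟩ ⟨-, hx, -, hy⟩
  exact retraction_eq_clampedRetraction hx.1.le hy

theorem retraction_zero (hc : 0 < c) {p : ℝ × ℝ} (hp : p.1 ≤ c) :
    retraction F c 0 p = (c, F c) := by
  simp only [retraction, if_pos hc, sub_zero, max_eq_left hp]

theorem retraction_corner {t : ℝ} (ht : 0 ≤ t) : retraction F c t (c, F c) = (c, F c) := by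
  unfold retraction
  split_ifs with htc
  · rw [max_eq_right (by linarith : c - t ≤ c)]
  · rw [max_eq_right (by linarith : F c - (t - c) ≤ F c)]

theorem retraction_of_sub_le {t : ℝ} (hct : c ≤ t) {p : ℝ × ℝ} (hp : F p.1 - (t - c) ≤ p.2) :
    retraction F c t p = p := by
  rw [retraction, if_neg (not_lt.2 hct), max_eq_right hp]

end HalfCell

open HalfCell in
/-- The two-dimensional half-cell `E = {(x,y) : x ∈ (0,a/2], 0 < y ≤ F x}` strongly
deformation retracts to the point `(a/2, F (a/2))`. -/
theorem stmt_13 (a : ℝ) (ha : 0 < a) (F : ℝ → ℝ) (lF cF : ℝ)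
    (hF : ∀ x, F x = lF * x + cF)
    (hFpos : ∀ x ∈ Set.Ioc 0 (a / 2), 0 < F x)
    (M : ℝ) (hM : ∀ x ∈ Set.Ioc 0 (a / 2), F x ≤ M) :
    let Hhalf : ℝ → ℝ → ℝ := fun t x => max (a / 2 - t) x
    let E : Set (ℝ × ℝ) := {p | p.1 ∈ Set.Ioc 0 (a / 2) ∧ 0 < p.2 ∧ p.2 ≤ F p.1}
    let q : ℝ := a / 2 + M
    let Ht : ℝ → ℝ × ℝ → ℝ × ℝ := fun t p =>
      if t < a / 2 then (Hhalf t p.1, F (Hhalf t p.1))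
      else (p.1, max (F p.1 - (t - a / 2)) p.2)
    Set.MapsTo (fun z : ℝ × (ℝ × ℝ) => Ht z.1 z.2) (Set.Icc 0 q ×ˢ E) E ∧
    ContinuousOn (fun z : ℝ × (ℝ × ℝ) => Ht z.1 z.2) (Set.Icc 0 q ×ˢ E) ∧
    (∀ p ∈ E, Ht 0 p = (a / 2, F (a / 2))) ∧
    (∀ t ∈ Set.Icc 0 q, Ht t (a / 2, F (a / 2)) = (a / 2, F (a / 2))) ∧
    (∀ p ∈ E, Ht q p = p) := by
  intro Hhalf E q Ht
  have hFc : Continuous F := by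
    rw [funext hF]
    fun_prop
  refine ⟨fun z hz => retraction_mem_cell hFpos hz.1.1 hz.2,
    (continuousOn_retraction hFc).mono (prod_mono (subset_univ _) subset_rfl),
    fun p hp => retraction_zero (half_pos ha) hp.1.2,
    fun t ht => retraction_corner ht.1, fun p hp => retraction_of_sub_le ?_ ?_⟩
  · have hM0 : 0 < M := (hFpos _ hp.1).trans_le (hM _ hp.1)
    simp only [q]
    linarith
  · simp only [q]
    linarith [hM _ hp.1, hp.2.1]
end
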